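/- Let F be an algebraically closed field of characteristic zero and let L be an n-dimensional filiform Lie algebra over F with n ≥ 4, equipped with a basis e_1, …, e_n satisfying [e_1, e_i] = e_{i+1} for all 2 ≤ i ≤ n−1. Define the linear operator Δ on L by Δ(Σ_{k=1}^n x_k e_k) = 2 x_2 e_{n−1} + x_3 e_n. Then Δ is a local derivation on L which is not a derivation. -/

import Mathlib

/-!
Write `Cᵏ` for the lower central series. Since `e_{k+2}, …, e_n ∈ Cᵏ` and `dim Cᵏ = n - k - 1`,
`Cᵏ` is spanned by `e_{k+2}, …, e_n`; in particular `C^{n-1} = 0`, so `C^{n-2}` is central and,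
by `⁅Cⁱ, Cʲ⁆ ⊆ C^{i+j+1}`, `C^{n-3}` commutes with `C¹`. For `a ∈ C^{n-3}` this makes
`x ↦ x₂ a + x₃ ⁅e₁, a⁆` a derivation: it kills `e₁` and `C²`, sends `C¹` into the center, and is
compatible with `⁅e₁, e₂⁆ = e₃`; as `L = ⟨e₁, e₂⟩ + C¹`, that suffices. `Δ x` is the value at `x`
of this derivation for `a = e_{n-1}` if `x₂ = 0`, and for `a = 2 e_{n-1} - (x₃ / x₂) e_n`
otherwise. But `Δ ⁅e₁, e₂⁆ = e_n` while `⁅Δ e₁, e₂⁆ + ⁅e₁, Δ e₂⁆ = 2 e_n`.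
-/

open LieModule Module

section General

variable {R L : Type*} [CommRing R] [LieRing L] [LieAlgebra R L]

theorem lie_mem_lowerCentralSeries_add {i j : ℕ} {x y : L}
    (hx : x ∈ lowerCentralSeries R L L i) (hy : y ∈ lowerCentralSeries R L L j) :
    ⁅x, y⁆ ∈ lowerCentralSeries R L L (i + j + 1) := by
  induction i generalizing x y j with
  | zero =>
    rw [zero_add, lowerCentralSeries_succ]
    exact LieSubmodule.lie_mem_lie (LieSubmodule.mem_top x) hy
  | succ i ih =>
    rw [lowerCentralSeries_succ, ← LieSubmodule.mem_toSubmodule,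
      LieSubmodule.lieIdeal_oper_eq_linear_span] at hx
    induction hx using Submodule.span_induction with
    | mem _ hx =>
      obtain ⟨⟨u, -⟩, ⟨w, hw⟩, rfl⟩ := hx
      have huy : ⁅u, y⁆ ∈ lowerCentralSeries R L L (j + 1) := by
        rw [lowerCentralSeries_succ]
        exact LieSubmodule.lie_mem_lie (LieSubmodule.mem_top u) hy
      rw [lie_lie, show i + 1 + j + 1 = i + j + 1 + 1 by omega]
      refine sub_mem ?_ ?_
      · rw [lowerCentralSeries_succ]
        exact LieSubmodule.lie_mem_lie (LieSubmodule.mem_top u) (ih hw hy)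
      · simpa only [add_assoc] using ih hw huy
    | zero => simp
    | add x₁ x₂ _ _ h₁ h₂ => rw [add_lie]; exact add_mem h₁ h₂
    | smul r x _ hx => rw [smul_lie]; exact SMulMemClass.smul_mem r hx

theorem leibniz_of_span_eq_top {s : Set L} (hs : Submodule.span R s = ⊤) (W : L →ₗ[R] L)
    (h : ∀ x ∈ s, ∀ y ∈ s, W ⁅x, y⁆ = ⁅x, W y⁆ - ⁅y, W x⁆) (x y : L) :
    W ⁅x, y⁆ = ⁅x, W y⁆ - ⁅y, W x⁆ := by
  let δ : L →ₗ[R] L →ₗ[R] L := LinearMap.mk₂ R (fun x y => W ⁅x, y⁆ - (⁅x, W y⁆ - ⁅y, W x⁆))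
    (fun _ _ _ => by simp only [add_lie, lie_add, map_add]; abel)
    (fun _ _ _ => by simp only [smul_lie, lie_smul, map_smul, smul_sub])
    (fun _ _ _ => by simp only [add_lie, lie_add, map_add]; abel)
    (fun _ _ _ => by simp only [smul_lie, lie_smul, map_smul, smul_sub])
  have hδ : δ = 0 := LinearMap.ext_on hs fun x hx => LinearMap.ext_on hs fun y hy => by
    simp [δ, h x hx y hy]
  exact sub_eq_zero.mp (LinearMap.congr_fun₂ hδ x y)

theorem leibniz_of_span_pair_sup_lowerCentralSeries_eq_top (W : L →ₗ[R] L) {x₀ x₁ : L}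
    (hspan : Submodule.span R {x₀, x₁} ⊔ (lowerCentralSeries R L L 1).toSubmodule = ⊤)
    (hx₀ : W x₀ = 0) (hx₀₁ : W ⁅x₀, x₁⁆ = ⁅x₀, W x₁⁆)
    (hx₁ : ∀ z ∈ lowerCentralSeries R L L 1, ⁅W x₁, z⁆ = 0)
    (hcenter : ∀ z ∈ lowerCentralSeries R L L 1, W z ∈ LieAlgebra.center R L)
    (hker : ∀ z ∈ lowerCentralSeries R L L 2, W z = 0) (x y : L) :
    W ⁅x, y⁆ = ⁅x, W y⁆ - ⁅y, W x⁆ := by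
  have swap : ∀ x y : L, W ⁅x, y⁆ = ⁅x, W y⁆ - ⁅y, W x⁆ → W ⁅y, x⁆ = ⁅y, W x⁆ - ⁅x, W y⁆ :=
    fun x y h => by rw [← lie_skew, map_neg, h, neg_sub]
  let s : Set L := {x₀, x₁} ∪ lowerCentralSeries R L L 1
  have hs : Submodule.span R s = ⊤ := by
    rw [Submodule.span_union, ← LieSubmodule.coe_toSubmodule, Submodule.span_eq, hspan]
  have hcomm : ∀ y ∈ s, ∀ z ∈ lowerCentralSeries R L L 1, ⁅z, W y⁆ = 0 := by
    rintro y ((rfl | rfl) | hy) z hz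
    · rw [hx₀, lie_zero]
    · rw [← lie_skew, hx₁ z hz, neg_zero]
    · exact (mem_maxTrivSubmodule R L L _).mp (hcenter y hy) z
  have hC : ∀ z ∈ lowerCentralSeries R L L 1, ∀ y ∈ s, W ⁅z, y⁆ = ⁅z, W y⁆ - ⁅y, W z⁆ := by
    intro z hz y hy
    rw [hker _ (lie_mem_lowerCentralSeries_add (j := 0) hz (LieSubmodule.mem_top y)),
      hcomm y hy z hz,
      (mem_maxTrivSubmodule R L L _).mp (hcenter z hz) y, sub_zero]
  refine leibniz_of_span_eq_top hs W (fun x hx y hy => ?_) x y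
  rcases hx with (rfl | rfl) | hx
  · rcases hy with (rfl | rfl) | hy
    · simp
    · rw [hx₀₁, hx₀, lie_zero, sub_zero]
    · exact swap _ _ (hC y hy _ (by simp [s]))
  · rcases hy with (rfl | rfl) | hy
    · rw [swap _ _ (by rw [hx₀₁, hx₀, lie_zero, sub_zero])]
    · simp
    · exact swap _ _ (hC y hy _ (by simp [s]))
  · exact hC x hx y hy

end General

section Filiform

variable {F L : Type*} [Field F] [LieRing L] [LieAlgebra F L] {n : ℕ}

theorem basis_mem_lowerCentralSeries (b : Basis (Fin n) F L)
    (hb : ∀ i : ℕ, ∀ h1 : 1 ≤ i, ∀ h2 : i ≤ n - 2,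
      ⁅b ⟨0, by omega⟩, b ⟨i, by omega⟩⁆ = b ⟨i + 1, by omega⟩)
    {k i : ℕ} (hi : i < n) (hki : k < i) : b ⟨i, hi⟩ ∈ lowerCentralSeries F L L k := by
  induction k generalizing i with
  | zero => exact LieSubmodule.mem_top _
  | succ k ih =>
    obtain ⟨j, rfl⟩ : ∃ j, i = j + 1 := ⟨i - 1, by omega⟩
    rw [← hb j (by omega) (by omega), lowerCentralSeries_succ]
    exact LieSubmodule.lie_mem_lie (LieSubmodule.mem_top _) (ih _ (by omega))

/-- Indices are 0-based: `b i` is the paper's `e_{i+1}`. -/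
structure IsFiliformBasis (b : Basis (Fin n) F L) : Prop where
  finrank_lowerCentralSeries : ∀ k : ℕ, 1 ≤ k → k ≤ n - 1 →
    Module.finrank F (lowerCentralSeries F L L k) = n - k - 1
  lie_basis_zero : ∀ i : ℕ, ∀ h1 : 1 ≤ i, ∀ h2 : i ≤ n - 2,
    ⁅b ⟨0, by omega⟩, b ⟨i, by omega⟩⁆ = b ⟨i + 1, by omega⟩

namespace IsFiliformBasis

variable {b : Basis (Fin n) F L}

theorem lowerCentralSeries_eq_span (hb : IsFiliformBasis b) {k : ℕ} (hk1 : 1 ≤ k) (hk : k < n) :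
    (lowerCentralSeries F L L k).toSubmodule = Submodule.span F (b '' Set.Ioi ⟨k, hk⟩) := by
  have := Module.Finite.of_basis b
  symm
  apply Submodule.eq_of_le_of_finrank_le
  · rw [Submodule.span_le]
    rintro _ ⟨⟨i, hi⟩, hki, rfl⟩
    exact basis_mem_lowerCentralSeries b hb.lie_basis_zero hi (Fin.mk_lt_mk.mp hki)
  · have himage : b '' Set.Ioi ⟨k, hk⟩ =
        Set.range (b ∘ ((↑) : Finset.Ioi (⟨k, hk⟩ : Fin n) → Fin n)) := by
      rw [Set.range_comp, Subtype.range_coe, Finset.coe_Ioi]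
    rw [himage, finrank_span_eq_card (b.linearIndependent.comp _ Subtype.val_injective),
      Fintype.card_coe, Fin.card_Ioi]
    exact (hb.finrank_lowerCentralSeries k hk1 (by omega)).trans_le (Nat.sub_right_comm n k 1).le

theorem lowerCentralSeries_eq_bot (hb : IsFiliformBasis b) (hn : 2 ≤ n) :
    lowerCentralSeries F L L (n - 1) = ⊥ := by
  have := Module.Finite.of_basis b
  rw [← LieSubmodule.toSubmodule_eq_bot, ← Submodule.finrank_eq_zero]
  exact (hb.finrank_lowerCentralSeries (n - 1) (by omega) le_rfl).trans (by omega)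

theorem lowerCentralSeries_le_center (hb : IsFiliformBasis b) (hn : 2 ≤ n) :
    lowerCentralSeries F L L (n - 2) ≤ LieAlgebra.center F L := by
  intro z hz
  rw [mem_maxTrivSubmodule]
  intro y
  have hyz := LieSubmodule.lie_mem_lie (LieSubmodule.mem_top y) hz
  rwa [← lowerCentralSeries_succ, show n - 2 + 1 = n - 1 by omega, hb.lowerCentralSeries_eq_bot hn,
    LieSubmodule.mem_bot] at hyz

theorem repr_eq_zero_of_mem_lowerCentralSeries (hb : IsFiliformBasis b) {k : ℕ} (hk1 : 1 ≤ k)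
    (hk : k < n) {z : L} (hz : z ∈ lowerCentralSeries F L L k) {i : Fin n} (hi : i.val ≤ k) :
    b.repr z i = 0 := by
  rw [← LieSubmodule.mem_toSubmodule, hb.lowerCentralSeries_eq_span hk1 hk, b.mem_span_image] at hz
  by_contra h
  exact absurd (hz (Finsupp.mem_support_iff.mpr h)) (by simpa [Fin.lt_def] using hi)

theorem span_pair_sup_lowerCentralSeries_one (hb : IsFiliformBasis b) (hn : 2 ≤ n) :
    Submodule.span F {b ⟨0, by omega⟩, b ⟨1, by omega⟩} ⊔
      (lowerCentralSeries F L L 1).toSubmodule = ⊤ := by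
  have hcover :
      {⟨0, by omega⟩, ⟨1, by omega⟩} ∪ Set.Ioi ⟨1, by omega⟩ = (Set.univ : Set (Fin n)) := by
    ext ⟨i, hi⟩
    simp only [Set.mem_union, Set.mem_insert_iff, Fin.mk.injEq, Set.mem_singleton_iff,
      Set.mem_Ioi, Fin.lt_def, Set.mem_univ, iff_true]
    omega
  rw [hb.lowerCentralSeries_eq_span le_rfl (by omega), ← Set.image_pair, ← Submodule.span_union,
    ← Set.image_union, hcover, Set.image_univ, b.span_eq]

theorem exists_lieDerivation_apply (hb : IsFiliformBasis b) (hn : 3 ≤ n) {a : L}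
    (ha : a ∈ lowerCentralSeries F L L (n - 3)) :
    ∃ D : LieDerivation F L L, ∀ x : L,
      D x = b.repr x ⟨1, by omega⟩ • a + b.repr x ⟨2, by omega⟩ • ⁅b ⟨0, by omega⟩, a⁆ := by
  let W : L →ₗ[F] L := (b.coord ⟨1, by omega⟩).smulRight a +
    (b.coord ⟨2, by omega⟩).smulRight ⁅b ⟨0, by omega⟩, a⁆
  have hW : ∀ x, W x = b.repr x ⟨1, by omega⟩ • a + b.repr x ⟨2, by omega⟩ • ⁅b ⟨0, by omega⟩, a⁆ :=
    fun x => rfl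
  have hW₁ : ∀ z ∈ lowerCentralSeries F L L 1,
      W z = b.repr z ⟨2, by omega⟩ • ⁅b ⟨0, by omega⟩, a⁆ := by
    intro z hz
    rw [hW, hb.repr_eq_zero_of_mem_lowerCentralSeries le_rfl (by omega) hz le_rfl, zero_smul,
      zero_add]
  refine ⟨{ toLinearMap := W, leibniz' := ?_ }, hW⟩
  refine leibniz_of_span_pair_sup_lowerCentralSeries_eq_top W
    (hb.span_pair_sup_lowerCentralSeries_one (by omega)) ?_ ?_ ?_ ?_ ?_
  · simp [hW]
  · rw [hb.lie_basis_zero 1 le_rfl (by omega)]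
    simp [hW]
  · intro z hz
    rw [show W (b ⟨1, by omega⟩) = a by simp [hW]]
    have haz := lie_mem_lowerCentralSeries_add ha hz
    rwa [show n - 3 + 1 + 1 = n - 1 by omega, hb.lowerCentralSeries_eq_bot (by omega),
      LieSubmodule.mem_bot] at haz
  · intro z hz
    rw [hW₁ z hz]
    refine SMulMemClass.smul_mem _ (hb.lowerCentralSeries_le_center (by omega) ?_)
    have := LieSubmodule.lie_mem_lie (LieSubmodule.mem_top (b ⟨0, by omega⟩)) ha
    rwa [← lowerCentralSeries_succ, show n - 3 + 1 = n - 2 by omega] at this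
  · intro z hz
    rw [hW₁ z (LieModule.antitone_lowerCentralSeries F L L (by norm_num) hz),
      hb.repr_eq_zero_of_mem_lowerCentralSeries (by norm_num) (by omega) hz le_rfl, zero_smul]

end IsFiliformBasis
end Filiform

/-- In an `n`-dimensional filiform Lie algebra (`n ≥ 4`) over an algebraically closed
field of characteristic zero with a basis `e₁, …, eₙ` (indexed by `Fin n`,
`e_k = b ⟨k-1, _⟩`) satisfying `⁅e₁, eᵢ⁆ = e_{i+1}` for `2 ≤ i ≤ n - 1`, the linear
operator `Δ (Σ x_k e_k) = 2 x₂ e_{n-1} + x₃ eₙ` is a local derivation which is not a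
derivation. -/
theorem filiform_local_derivation_not_derivation
    (F : Type*) [Field F]
    (L : Type*) [LieRing L] [LieAlgebra F L]
    (n : ℕ) (hn : 4 ≤ n)
    (hfil : ∀ k : ℕ, 1 ≤ k → k ≤ n - 1 →
      Module.finrank F ↥(LieModule.lowerCentralSeries F L L k) = n - k - 1)
    (b : Module.Basis (Fin n) F L)
    (hb : ∀ i : ℕ, ∀ h1 : 1 ≤ i, ∀ h2 : i ≤ n - 2,
      ⁅b ⟨0, by omega⟩, b ⟨i, by omega⟩⁆ = b ⟨i + 1, by omega⟩)
    (Δ : L →ₗ[F] L)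
    (hΔ : ∀ x : L,
      Δ x = (2 * b.repr x ⟨1, by omega⟩) • b ⟨n - 2, by omega⟩
          + (b.repr x ⟨2, by omega⟩) • b ⟨n - 1, by omega⟩) :
    (∀ x : L, ∃ D : LieDerivation F L L, Δ x = D x) ∧
    ¬ (∀ x y : L, Δ ⁅x, y⁆ = ⁅Δ x, y⁆ + ⁅x, Δ y⁆) := by
  have hfb : IsFiliformBasis b := ⟨hfil, hb⟩
  have hmem : ∀ i (hi : i < n), n - 3 < i → b ⟨i, hi⟩ ∈ lowerCentralSeries F L L (n - 3) :=
    fun i hi => basis_mem_lowerCentralSeries b hb hi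
  have hcentral : ⁅b ⟨0, by omega⟩, b ⟨n - 1, by omega⟩⁆ = 0 :=
    (mem_maxTrivSubmodule F L L _).mp (hfb.lowerCentralSeries_le_center (by omega)
      (basis_mem_lowerCentralSeries b hb (i := n - 1) _ (by omega))) _
  have hbracket : ⁅b ⟨0, by omega⟩, b ⟨n - 2, by omega⟩⁆ = b ⟨n - 1, by omega⟩ := by
    simpa [show n - 2 + 1 = n - 1 by omega] using hb (n - 2) (by omega) le_rfl
  refine ⟨fun x => ?_, fun hder => ?_⟩
  · by_cases hx₁ : b.repr x ⟨1, by omega⟩ = 0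
    · obtain ⟨D, hD⟩ :=
        hfb.exists_lieDerivation_apply (by omega) (hmem (n - 2) (by omega) (by omega))
      refine ⟨D, ?_⟩
      rw [hΔ, hD, hbracket, hx₁]
      simp
    · obtain ⟨D, hD⟩ := hfb.exists_lieDerivation_apply (by omega)
        (a := (2 : F) • b ⟨n - 2, by omega⟩ -
          (b.repr x ⟨2, by omega⟩ / b.repr x ⟨1, by omega⟩) • b ⟨n - 1, by omega⟩)
        (sub_mem (SMulMemClass.smul_mem _ (hmem (n - 2) (by omega) (by omega)))
          (SMulMemClass.smul_mem _ (hmem (n - 1) (by omega) (by omega))))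
      refine ⟨D, ?_⟩
      rw [hΔ, hD, lie_sub, lie_smul, lie_smul, hbracket, hcentral]
      match_scalars
      · ring
      · field_simp
        ring
  · have h := hder (b ⟨0, by omega⟩) (b ⟨1, by omega⟩)
    simp [hb 1 le_rfl (by omega), hΔ, hbracket, two_smul, b.ne_zero] at h
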